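/- A convex curve γ has constant u-width (γ(θ) - γ(θ+π) = 2c·u(θ) for some constant c) if and only if γ is parallel to u (tangents of γ at θ are parallel to tangents of u at θ). -/

import Mathlib

open Real

/-- Determinant of two plane vectors. -/
noncomputable def det2 (w₁ w₂ : ℝ × ℝ) : ℝ := w₁.1 * w₂.2 - w₁.2 * w₂.1

/-!
If `w(θ) = t(θ) • u(θ)` with `u(θ), u'(θ)` independent, then `w' = t' • u + t • u'`, so `w'`
is parallel to `u'` exactly when `t' = 0`. For `w(θ) = γ(θ) - γ(θ + π)` both `w'(θ)` and `u'(θ)`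
are multiples of `(-sin θ, cos θ)`, so the ratio `t` is constant. Differentiability of `t` is not
given a priori; near `θ₀` it is read off as `det2 (w θ) v / det2 (u θ) v` with `v = u'(θ₀)`.
-/

lemma det2_smul_left (a : ℝ) (v w : ℝ × ℝ) : det2 (a • v) w = a * det2 v w := by
  simp only [det2, Prod.smul_fst, Prod.smul_snd, smul_eq_mul]
  ring

lemma det2_self (v : ℝ × ℝ) : det2 v v = 0 := by
  simp only [det2]
  ring

lemma det2_smul_smul_self (a b : ℝ) (v : ℝ × ℝ) : det2 (a • v) (b • v) = 0 := by
  simp only [det2, Prod.smul_fst, Prod.smul_snd, smul_eq_mul]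
  ring

lemma det2_zero_right (v : ℝ × ℝ) : det2 v 0 = 0 := by
  simp [det2]

lemma HasDerivAt.det2 {a b : ℝ → ℝ × ℝ} {a' b' : ℝ × ℝ} {x : ℝ}
    (ha : HasDerivAt a a' x) (hb : HasDerivAt b b' x) :
    HasDerivAt (fun t => det2 (a t) (b t)) (det2 a' (b x) + det2 (a x) b') x := by
  have hfst {f : ℝ → ℝ × ℝ} {f' : ℝ × ℝ} (hf : HasDerivAt f f' x) :
      HasDerivAt (fun t => (f t).1) f'.1 x := by
    simpa using hf.hasFDerivAt.fst.hasDerivAt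
  have hsnd {f : ℝ → ℝ × ℝ} {f' : ℝ × ℝ} (hf : HasDerivAt f f' x) :
      HasDerivAt (fun t => (f t).2) f'.2 x := by
    simpa using hf.hasFDerivAt.snd.hasDerivAt
  refine (((hfst ha).mul (hsnd hb)).sub ((hsnd ha).mul (hfst hb))).congr_deriv ?_
  simp only [_root_.det2]
  ring

lemma hasDerivAt_zero_of_eq_smul {u w : ℝ → ℝ × ℝ} {t : ℝ → ℝ} {u' w' : ℝ × ℝ} {x : ℝ}
    (hu : HasDerivAt u u' x) (hw : HasDerivAt w w' x) (hind : det2 (u x) u' ≠ 0)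
    (hpar : det2 w' u' = 0) (hwt : ∀ᶠ θ in nhds x, w θ = t θ • u θ) :
    HasDerivAt t 0 x := by
  have hconst : HasDerivAt (fun _ : ℝ => u') 0 x := hasDerivAt_const x u'
  have hden := hu.det2 hconst
  have hquot := (hw.det2 hconst).div hden hind
  simp only [hpar, det2_self, det2_zero_right, add_zero, zero_mul, mul_zero, sub_zero,
    zero_div] at hquot
  refine hquot.congr_of_eventuallyEq ?_
  filter_upwards [hden.continuousAt.eventually_ne hind, hwt] with θ hθ hwθ
  rw [Pi.div_apply, hwθ, det2_smul_left, mul_div_cancel_right₀ _ hθ]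

lemma exists_eq_const_smul_of_forall_eq_smul {u u' w w' : ℝ → ℝ × ℝ}
    (hu : ∀ θ, HasDerivAt u (u' θ) θ) (hw : ∀ θ, HasDerivAt w (w' θ) θ)
    (hind : ∀ θ, det2 (u θ) (u' θ) ≠ 0) (hpar : ∀ θ, det2 (w' θ) (u' θ) = 0)
    (h : ∀ θ, ∃ s : ℝ, w θ = s • u θ) : ∃ c : ℝ, ∀ θ, w θ = c • u θ := by
  choose t ht using h
  have hderiv (θ : ℝ) : HasDerivAt t 0 θ :=
    hasDerivAt_zero_of_eq_smul (hu θ) (hw θ) (hind θ) (hpar θ) (.of_forall ht)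
  refine ⟨t 0, fun θ => ?_⟩
  rw [ht θ, is_const_of_deriv_eq_zero (fun x => (hderiv x).differentiableAt)
    (fun x => (hderiv x).deriv) θ 0]

theorem constant_width_iff_parallel_general (u u' γ γ' : ℝ → ℝ × ℝ) (p q : ℝ → ℝ)
    (hu : ∀ θ, HasDerivAt u (u' θ) θ)
    (hudet : ∀ θ, 0 < det2 (u θ) (u' θ))
    (hup : ∀ θ, u' θ = p θ • (-Real.sin θ, Real.cos θ))
    (hγ : ∀ θ, HasDerivAt γ (γ' θ) θ)
    (hγ' : ∀ θ, γ' θ = q θ • (-Real.sin θ, Real.cos θ)) :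
    (∃ c : ℝ, ∀ θ, γ θ - γ (θ + π) = (2 * c) • u θ) ↔
      (∀ θ, ∃ t : ℝ, γ θ - γ (θ + π) = t • u θ) := by
  refine ⟨fun ⟨c, hc⟩ θ => ⟨2 * c, hc θ⟩, fun h => ?_⟩
  have hw (θ : ℝ) : HasDerivAt (fun θ => γ θ - γ (θ + π)) (γ' θ - γ' (θ + π)) θ :=
    (hγ θ).sub ((hγ (θ + π)).comp_add_const θ π)
  have hpar (θ : ℝ) : det2 (γ' θ - γ' (θ + π)) (u' θ) = 0 := by
    have hdiam : γ' θ - γ' (θ + π) = (q θ + q (θ + π)) • (-sin θ, cos θ) := by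
      rw [hγ', hγ', sin_add_pi, cos_add_pi, add_smul, ← neg_neg (-sin θ), ← Prod.neg_mk, smul_neg,
        sub_neg_eq_add]
    rw [hdiam, hup, det2_smul_smul_self]
  obtain ⟨c, hc⟩ := exists_eq_const_smul_of_forall_eq_smul hu hw (fun θ => (hudet θ).ne') hpar h
  exact ⟨c / 2, fun θ => by rw [mul_div_cancel₀ c two_ne_zero]; exact hc θ⟩

/-- γ has constant u-width iff γ is parallel to u, i.e. each diameter
γ(θ) - γ(θ+π) is a multiple of u(θ). -/
theorem constant_width_iff_parallel (u u' u'' γ γ' : ℝ → ℝ × ℝ) (p q : ℝ → ℝ)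
    (hu : ∀ θ, HasDerivAt u (u' θ) θ)
    (hu' : ∀ θ, HasDerivAt u' (u'' θ) θ)
    (husym : ∀ θ, u (θ + π) = -u θ)
    (hudet : ∀ θ, 0 < det2 (u θ) (u' θ))
    (hup : ∀ θ, u' θ = p θ • (-Real.sin θ, Real.cos θ)) (hp : ∀ θ, 0 < p θ)
    (hγ : ∀ θ, HasDerivAt γ (γ' θ) θ)
    (hγ' : ∀ θ, γ' θ = q θ • (-Real.sin θ, Real.cos θ)) (hq : ∀ θ, 0 < q θ) :
    (∃ c : ℝ, ∀ θ, γ θ - γ (θ + π) = (2 * c) • u θ) ↔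
      (∀ θ, ∃ t : ℝ, γ θ - γ (θ + π) = t • u θ) :=
  constant_width_iff_parallel_general u u' γ γ' p q hu hudet hup hγ hγ'
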